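/- Let X and Y be Banach spaces over ℝ. If X has both the Dunford–Pettis property and the Dieudonné property, and Y is weakly sequentially complete, then every bounded linear operator T : X → Y is strictly singular. -/

import Mathlib

open Filter Topology

section Defs

variable {E : Type*} [NormedAddCommGroup E] [NormedSpace ℝ E]
variable {F : Type*} [NormedAddCommGroup F] [NormedSpace ℝ F]

/-- A sequence converges weakly to `x₀`. -/
def WeakConvTo (x : ℕ → E) (x₀ : E) : Prop :=
  ∀ f : E →L[ℝ] ℝ, Tendsto (fun n => f (x n)) atTop (𝓝 (f x₀))

/-- A sequence is weakly Cauchy. -/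
def WeaklyCauchySeq (x : ℕ → E) : Prop :=
  ∀ f : E →L[ℝ] ℝ, ∃ L : ℝ, Tendsto (fun n => f (x n)) atTop (𝓝 L)

/-- Every bounded sequence has a weakly Cauchy subsequence. -/
def AlmostReflexive (E : Type*) [NormedAddCommGroup E] [NormedSpace ℝ E] : Prop :=
  ∀ x : ℕ → E, (∃ C : ℝ, ∀ n, ‖x n‖ ≤ C) →
    ∃ φ : ℕ → ℕ, StrictMono φ ∧ WeaklyCauchySeq (x ∘ φ)

/-- Every weakly convergent sequence converges in norm. -/
def SchurProperty (E : Type*) [NormedAddCommGroup E] [NormedSpace ℝ E] : Prop :=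
  ∀ (x : ℕ → E) (x₀ : E), WeakConvTo x x₀ → Tendsto x atTop (𝓝 x₀)

/-- Sequential reflexivity: every bounded sequence has a weakly convergent subsequence. -/
def SeqReflexive (E : Type*) [NormedAddCommGroup E] [NormedSpace ℝ E] : Prop :=
  ∀ x : ℕ → E, (∃ C : ℝ, ∀ n, ‖x n‖ ≤ C) →
    ∃ φ : ℕ → ℕ, StrictMono φ ∧ ∃ x₀ : E, WeakConvTo (x ∘ φ) x₀

/-- Every weakly Cauchy sequence converges weakly. -/
def WeaklySeqComplete (E : Type*) [NormedAddCommGroup E] [NormedSpace ℝ E] : Prop :=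
  ∀ x : ℕ → E, WeaklyCauchySeq x → ∃ x₀ : E, WeakConvTo x x₀

/-- No infinite-dimensional closed subspace is (sequentially) reflexive. -/
def VeryIrreflexive (E : Type*) [NormedAddCommGroup E] [NormedSpace ℝ E] : Prop :=
  ∀ X₀ : Subspace ℝ E, IsClosed (X₀ : Set E) → ¬FiniteDimensional ℝ X₀ →
    ¬SeqReflexive X₀

/-- A strictly singular bounded operator: on no infinite-dimensional closed subspace is it
an isomorphism onto its image. -/
def StrictlySingular (T : E →L[ℝ] F) : Prop :=
  ∀ X₀ : Subspace ℝ E, IsClosed (X₀ : Set E) → ¬FiniteDimensional ℝ X₀ →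
    ¬∃ c : ℝ, 0 < c ∧ ∀ x ∈ X₀, c * ‖x‖ ≤ ‖T x‖

/-- A weakly compact operator. -/
def WeaklyCompactOp (T : E →L[ℝ] F) : Prop :=
  ∀ x : ℕ → E, (∃ C : ℝ, ∀ n, ‖x n‖ ≤ C) →
    ∃ φ : ℕ → ℕ, StrictMono φ ∧ ∃ y : F, WeakConvTo (fun n => T (x (φ n))) y

/-- A completely continuous operator maps weakly convergent sequences to norm convergent ones. -/
def CompletelyContinuousOp (T : E →L[ℝ] F) : Prop :=
  ∀ (x : ℕ → E) (x₀ : E), WeakConvTo x x₀ → ∃ y : F, Tendsto (fun n => T (x n)) atTop (𝓝 y)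

/-- The image of the closed unit ball is relatively compact in norm. -/
def CompactOp (T : E →L[ℝ] F) : Prop :=
  IsCompact (closure (⇑T '' Metric.closedBall (0 : E) 1))

/-- The Dunford–Pettis property. -/
def DunfordPettisProp (E : Type*) [NormedAddCommGroup E] [NormedSpace ℝ E] : Prop :=
  ∀ (Z : Type*) [NormedAddCommGroup Z] [NormedSpace ℝ Z] [CompleteSpace Z],
    ∀ T : E →L[ℝ] Z, WeaklyCompactOp T → CompletelyContinuousOp T

/-- The reciprocal Dunford–Pettis property. -/
def ReciprocalDunfordPettisProp (E : Type*) [NormedAddCommGroup E] [NormedSpace ℝ E] : Prop :=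
  ∀ (Z : Type*) [NormedAddCommGroup Z] [NormedSpace ℝ Z] [CompleteSpace Z],
    ∀ T : E →L[ℝ] Z, CompletelyContinuousOp T → WeaklyCompactOp T

/-- The Dieudonné property. -/
def DieudonneProp (E : Type*) [NormedAddCommGroup E] [NormedSpace ℝ E] : Prop :=
  ∀ (Z : Type*) [NormedAddCommGroup Z] [NormedSpace ℝ Z] [CompleteSpace Z],
    ∀ T : E →L[ℝ] Z,
      (∀ x : ℕ → E, WeaklyCauchySeq x → ∃ y : Z, WeakConvTo (fun n => T (x n)) y) →
      WeaklyCompactOp T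

/-- A Grothendieck space: weak*-convergent sequences in the dual converge weakly. -/
def GrothendieckSpace (E : Type*) [NormedAddCommGroup E] [NormedSpace ℝ E] : Prop :=
  ∀ (f : ℕ → (E →L[ℝ] ℝ)) (g : E →L[ℝ] ℝ),
    (∀ x : E, Tendsto (fun n => f n x) atTop (𝓝 (g x))) →
    ∀ F : (E →L[ℝ] ℝ) →L[ℝ] ℝ, Tendsto (fun n => F (f n)) atTop (𝓝 (F g))

/-- The Banach space ℓ¹ of absolutely summable real sequences. -/
abbrev EllOne : Type := lp (fun _ : ℕ => ℝ) 1

/-- Quasi-reflexive: the canonical image of `E` in its bidual has finite codimension. -/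
def QuasiReflexive (E : Type*) [NormedAddCommGroup E] [NormedSpace ℝ E] : Prop :=
  FiniteDimensional ℝ
    ((StrongDual ℝ (StrongDual ℝ E)) ⧸
      LinearMap.range (NormedSpace.inclusionInDoubleDual ℝ E).toLinearMap)

/-- Hereditarily-ℓ¹: every infinite-dimensional closed subspace contains a closed subspace
topologically isomorphic to ℓ¹. -/
def HereditarilyEllOne (E : Type*) [NormedAddCommGroup E] [NormedSpace ℝ E] : Prop :=
  ∀ X₀ : Subspace ℝ E, IsClosed (X₀ : Set E) → ¬FiniteDimensional ℝ X₀ →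
    ∃ Z : Subspace ℝ E, Z ≤ X₀ ∧ IsClosed (Z : Set E) ∧ Nonempty (Z ≃L[ℝ] EllOne)

end Defs

/-!
Dieudonné together with weak sequential completeness of `Y` makes `T` weakly compact, and then
the Dunford–Pettis property makes it completely continuous. On a closed subspace on which `T` is
bounded below, a bounded sequence thus has a subsequence converging weakly, whose image under `T`
converges in norm, so that the subsequence itself converges in norm: the unit ball of the subspace
is compact and the subspace is finite-dimensional.

Both properties of `X` only quantify over targets in one fixed universe, so they are applied to `T`
followed by a map into (a universe lift of) `ℓ^∞` that is isometric on the separable closed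
subspace spanned by the sequence at hand.
-/

open scoped lp ENNReal

section WeakSequences

variable {E F G : Type*} [NormedAddCommGroup E] [NormedSpace ℝ E]
  [NormedAddCommGroup F] [NormedSpace ℝ F] [NormedAddCommGroup G] [NormedSpace ℝ G]

theorem WeakConvTo.map {x : ℕ → E} {x₀ : E} (h : WeakConvTo x x₀) (A : E →L[ℝ] F) :
    WeakConvTo (fun n => A (x n)) (A x₀) :=
  fun f => h (f.comp A)

theorem WeakConvTo.mem_of_isClosed_of_convex {s : Set E} (hconv : Convex ℝ s)
    (hclosed : IsClosed s) {x : ℕ → E} {x₀ : E} (hmem : ∀ n, x n ∈ s) (h : WeakConvTo x x₀) :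
    x₀ ∈ s := by
  by_contra hx₀
  obtain ⟨f, u, hfx₀, hfs⟩ := geometric_hahn_banach_point_closed hconv hclosed hx₀
  have : u ≤ f x₀ := ge_of_tendsto (h f) (Eventually.of_forall fun n => (hfs _ (hmem n)).le)
  linarith

theorem ContinuousLinearMap.exists_comp_eq_of_injective_of_isClosed_range [CompleteSpace E]
    [CompleteSpace F] (j : E →L[ℝ] F) (hinj : Function.Injective j) (hclo : IsClosed (Set.range j))
    (f : StrongDual ℝ E) : ∃ g : StrongDual ℝ F, g.comp j = f := by
  obtain ⟨g, hg, -⟩ := exists_extension_norm_eq (LinearMap.range (j : E →ₗ[ℝ] F))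
    (f.comp (j.equivRange hinj hclo).symm.toContinuousLinearMap)
  refine ⟨g, ContinuousLinearMap.ext fun v => ?_⟩
  simpa using hg ⟨j v, LinearMap.mem_range_self (j : E →ₗ[ℝ] F) v⟩

theorem WeakConvTo.exists_of_comp_antilipschitz [CompleteSpace E] [CompleteSpace F] {K : NNReal}
    (j : E →L[ℝ] F) (hj : AntilipschitzWith K j) {w : ℕ → E} {z : F}
    (h : WeakConvTo (fun n => j (w n)) z) : ∃ w₀, WeakConvTo w w₀ := by
  have hclo : IsClosed (Set.range j) := hj.isClosed_range j.uniformContinuous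
  obtain ⟨w₀, rfl⟩ : z ∈ Set.range j :=
    h.mem_of_isClosed_of_convex (LinearMap.range (j : E →ₗ[ℝ] F)).convex hclo
      fun n => ⟨w n, rfl⟩
  refine ⟨w₀, fun f => ?_⟩
  obtain ⟨g, rfl⟩ := j.exists_comp_eq_of_injective_of_isClosed_range hj.injective hclo f
  exact h g

end WeakSequences

theorem AntilipschitzWith.cauchySeq_of_comp {α β : Type*} [PseudoMetricSpace α]
    [PseudoMetricSpace β] {K : NNReal} {f : α → β} (hf : AntilipschitzWith K f) {u : ℕ → α}
    (hu : CauchySeq (f ∘ u)) : CauchySeq u := by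
  obtain ⟨b, b_nonneg, hb, blim⟩ := cauchySeq_iff_le_tendsto_0.1 hu
  refine cauchySeq_iff_le_tendsto_0.2 ⟨fun n => K * b n, fun n => mul_nonneg K.2 (b_nonneg n),
    fun n m N hn hm => ?_, by simpa using blim.const_mul (K : ℝ)⟩
  exact (hf.le_mul_dist _ _).trans (mul_le_mul_of_nonneg_left (hb n m N hn hm) K.2)

section Embedding

variable {F G : Type*} [NormedAddCommGroup F] [NormedSpace ℝ F]
  [NormedAddCommGroup G] [NormedSpace ℝ G]

theorem exists_clm_lpInfty_norm_map_of_isSeparable {s : Set F}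
    (hs : TopologicalSpace.IsSeparable s) : ∃ ι : F →L[ℝ] ℓ^∞(ℕ, ℝ), ∀ y ∈ s, ‖ι y‖ = ‖y‖ := by
  obtain ⟨c, hc, hsc⟩ := hs
  obtain ⟨d, hd⟩ := (hc.insert 0).exists_eq_range (Set.insert_nonempty _ _)
  choose f hf_norm hf_eq using fun k => exists_dual_vector'' ℝ (d k)
  have hfy : ∀ y k, ‖f k y‖ ≤ ‖y‖ := fun y k =>
    ((f k).le_opNorm y).trans (mul_le_of_le_one_left (norm_nonneg y) (hf_norm k))
  let L : F →ₗ[ℝ] ℓ^∞(ℕ, ℝ) :=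
    { toFun := fun y => ⟨fun k => f k y, memℓp_infty ⟨‖y‖, by rintro _ ⟨k, rfl⟩; exact hfy y k⟩⟩
      map_add' := fun a b => Subtype.ext <| funext fun k => map_add (f k) a b
      map_smul' := fun r a => Subtype.ext <| funext fun k => map_smul (f k) r a }
  have hL : ∀ y, ‖L y‖ ≤ 1 * ‖y‖ := fun y => by
    simpa using lp.norm_le_of_forall_le (norm_nonneg y) (hfy y)
  let ι := L.mkContinuous 1 hL
  refine ⟨ι, fun y hy => le_antisymm ((hL y).trans_eq (one_mul _)) ?_⟩
  -- `ι` does not shrink the norm on the dense sequence `d`, and that inequality is closed.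
  have hd_le : ∀ k, ‖d k‖ ≤ ‖ι (d k)‖ := fun k =>
    calc ‖d k‖ = f k (d k) := (hf_eq k).symm
      _ ≤ ‖f k (d k)‖ := le_abs_self _
      _ ≤ ‖ι (d k)‖ := lp.norm_apply_le_norm ENNReal.top_ne_zero (ι (d k)) k
  have hclosed : IsClosed {y : F | ‖y‖ ≤ ‖ι y‖} := isClosed_le continuous_norm ι.continuous.norm
  refine hclosed.closure_subset_iff.2 (Set.range_subset_iff.2 hd_le) ?_
  rw [← hd]
  exact closure_mono (Set.subset_insert _ _) (hsc hy)

universe w in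
theorem exists_isClosed_submodule_clm_ulift_lpInfty_norm_map (y : ℕ → F) :
    ∃ (Y₀ : Submodule ℝ F) (ι : F →L[ℝ] ULift.{w} ℓ^∞(ℕ, ℝ)),
      IsClosed (Y₀ : Set F) ∧ (∀ n, y n ∈ Y₀) ∧ ∀ v ∈ Y₀, ‖ι v‖ = ‖v‖ := by
  set Y₀ := (Submodule.span ℝ (Set.range y)).topologicalClosure
  have hsep : TopologicalSpace.IsSeparable (Y₀ : Set F) := by
    rw [Submodule.topologicalClosure_coe]
    exact (Set.countable_range y).isSeparable.span.closure
  obtain ⟨ι, hι⟩ := exists_clm_lpInfty_norm_map_of_isSeparable hsep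
  let lift : ℓ^∞(ℕ, ℝ) ≃L[ℝ] ULift.{w} ℓ^∞(ℕ, ℝ) := ContinuousLinearEquiv.ulift.symm
  exact ⟨Y₀, lift.toContinuousLinearMap.comp ι, Submodule.isClosed_topologicalClosure _,
    fun n => Submodule.le_topologicalClosure _ (Submodule.subset_span ⟨n, rfl⟩), hι⟩

variable [CompleteSpace F] {Y₀ : Submodule ℝ F} {ι : F →L[ℝ] G} {y : ℕ → F}

theorem WeakConvTo.exists_of_comp_norm_map_on [CompleteSpace G] (hY₀ : IsClosed (Y₀ : Set F))
    (hι : ∀ v ∈ Y₀, ‖ι v‖ = ‖v‖) (hy : ∀ n, y n ∈ Y₀) {z : G}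
    (h : WeakConvTo (fun n => ι (y n)) z) : ∃ y₀, WeakConvTo y y₀ := by
  have := hY₀.completeSpace_coe
  have hj : Isometry (ι.comp Y₀.subtypeL) := AddMonoidHomClass.isometry_of_norm _ fun v => hι v v.2
  obtain ⟨w₀, hw₀⟩ :=
    WeakConvTo.exists_of_comp_antilipschitz _ hj.antilipschitz (w := fun n => ⟨y n, hy n⟩) h
  exact ⟨w₀, hw₀.map Y₀.subtypeL⟩

theorem exists_tendsto_of_comp_norm_map_on (hY₀ : IsClosed (Y₀ : Set F))
    (hι : ∀ v ∈ Y₀, ‖ι v‖ = ‖v‖) (hy : ∀ n, y n ∈ Y₀) {z : G}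
    (h : Tendsto (fun n => ι (y n)) atTop (𝓝 z)) : ∃ y₀, Tendsto y atTop (𝓝 y₀) := by
  have := hY₀.completeSpace_coe
  have hj : Isometry (ι.comp Y₀.subtypeL) := AddMonoidHomClass.isometry_of_norm _ fun v => hι v v.2
  obtain ⟨w₀, hw₀⟩ := cauchySeq_tendsto_of_complete
    (hj.antilipschitz.cauchySeq_of_comp (u := fun n => (⟨y n, hy n⟩ : Y₀)) h.cauchySeq)
  exact ⟨w₀, (continuous_subtype_val.tendsto w₀).comp hw₀⟩

end Embedding

section Operators

variable {E F G : Type*} [NormedAddCommGroup E] [NormedSpace ℝ E]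
  [NormedAddCommGroup F] [NormedSpace ℝ F] [NormedAddCommGroup G] [NormedSpace ℝ G]

theorem WeaklyCompactOp.clm_comp {T : E →L[ℝ] F} (hT : WeaklyCompactOp T) (A : F →L[ℝ] G) :
    WeaklyCompactOp (A.comp T) := fun x hx =>
  let ⟨φ, hφ, y, hy⟩ := hT x hx
  ⟨φ, hφ, A y, hy.map A⟩

theorem WeaklyCompactOp.comp {T : F →L[ℝ] G} (hT : WeaklyCompactOp T) (A : E →L[ℝ] F) :
    WeaklyCompactOp (T.comp A) := by
  rintro x ⟨C, hC⟩
  exact hT (fun n => A (x n))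
    ⟨‖A‖ * C, fun n => (A.le_opNorm _).trans (mul_le_mul_of_nonneg_left (hC n) (norm_nonneg A))⟩

theorem CompletelyContinuousOp.comp {T : F →L[ℝ] G} (hT : CompletelyContinuousOp T)
    (A : E →L[ℝ] F) : CompletelyContinuousOp (T.comp A) :=
  fun _ _ hx => hT _ _ (hx.map A)

theorem FiniteDimensional.of_antilipschitz_of_weaklyCompactOp_of_completelyContinuousOp
    [CompleteSpace E] [CompleteSpace F] {T : E →L[ℝ] F} {K : NNReal} (hT : AntilipschitzWith K T)
    (hwc : WeaklyCompactOp T) (hcc : CompletelyContinuousOp T) : FiniteDimensional ℝ E := by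
  refine .of_isCompact_closedBall₀ ℝ one_pos (IsSeqCompact.isCompact fun x hx => ?_)
  obtain ⟨φ, hφ, y, hy⟩ := hwc x ⟨1, fun n => by simpa using hx n⟩
  obtain ⟨x₀, hx₀⟩ := WeakConvTo.exists_of_comp_antilipschitz T hT hy
  obtain ⟨z, hz⟩ := hcc _ _ hx₀
  obtain ⟨a, ha⟩ := cauchySeq_tendsto_of_complete (hT.cauchySeq_of_comp hz.cauchySeq)
  exact ⟨a, Metric.isClosed_closedBall.mem_of_tendsto ha (Eventually.of_forall fun n => hx (φ n)),
    φ, hφ, ha⟩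

end Operators

section SpaceProperties

variable {X Y : Type*} [NormedAddCommGroup X] [NormedSpace ℝ X]
  [NormedAddCommGroup Y] [NormedSpace ℝ Y] [CompleteSpace Y]

theorem DieudonneProp.weaklyCompactOp (hX : DieudonneProp X) (hY : WeaklySeqComplete Y)
    (T : X →L[ℝ] Y) : WeaklyCompactOp T := by
  intro x hx
  obtain ⟨Y₀, ι, hY₀, hmem, hι⟩ := exists_isClosed_submodule_clm_ulift_lpInfty_norm_map (T ∘ x)
  have hιT : WeaklyCompactOp (ι.comp T) := hX _ (ι.comp T) fun w hw => by
    obtain ⟨y, hy⟩ := hY _ fun f => hw (f.comp T)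
    exact ⟨ι y, hy.map ι⟩
  obtain ⟨φ, hφ, z, hz⟩ := hιT x hx
  exact ⟨φ, hφ, WeakConvTo.exists_of_comp_norm_map_on hY₀ hι (fun n => hmem (φ n)) hz⟩

theorem DunfordPettisProp.completelyContinuousOp (hX : DunfordPettisProp X) {T : X →L[ℝ] Y}
    (hT : WeaklyCompactOp T) : CompletelyContinuousOp T := by
  intro x x₀ hx
  obtain ⟨Y₀, ι, hY₀, hmem, hι⟩ := exists_isClosed_submodule_clm_ulift_lpInfty_norm_map (T ∘ x)
  obtain ⟨z, hz⟩ := hX _ (ι.comp T) (hT.clm_comp ι) x x₀ hx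
  exact exists_tendsto_of_comp_norm_map_on hY₀ hι hmem hz

end SpaceProperties

variable {X : Type*} [NormedAddCommGroup X] [NormedSpace ℝ X] [CompleteSpace X]
variable {Y : Type*} [NormedAddCommGroup Y] [NormedSpace ℝ Y] [CompleteSpace Y]

/-- If `X` has the Dunford–Pettis and Dieudonné properties and `Y` is weakly sequentially
complete, then every bounded linear operator `T : X → Y` is strictly singular. -/
theorem stmt17 (hX : DunfordPettisProp X) (hX' : DieudonneProp X) (hY : WeaklySeqComplete Y)
    (T : X →L[ℝ] Y) : StrictlySingular T := by
  rintro X₀ hX₀ hinf ⟨c, hc, hbound⟩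
  have := hX₀.completeSpace_coe
  have hwc : WeaklyCompactOp T := hX'.weaklyCompactOp hY T
  have hanti : AntilipschitzWith ⟨c⁻¹, (inv_pos.2 hc).le⟩ (T.comp X₀.subtypeL) :=
    (T.comp X₀.subtypeL).antilipschitz_of_bound fun u => (le_inv_mul_iff₀ hc).2 (hbound u u.2)
  exact hinf (.of_antilipschitz_of_weaklyCompactOp_of_completelyContinuousOp hanti
    (hwc.comp X₀.subtypeL) ((hX.completelyContinuousOp hwc).comp X₀.subtypeL))
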